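/- arXiv:2209.04685 — 5 statements merged into one kernel-verified Lean document; each statement's English description precedes it below -/
import Mathlib

section
/- Let {1,…,m} be partitioned into nonempty sets J = {1,…,m'} and I = {m'+1,…,m}. Let p ∈ ℝ^m with p > 0 (componentwise), let k ∈ ℝ^{|I|}, c ∈ ℝ^{m'} be arbitrary vectors, let E be an m'×m' positive semidefinite matrix, let F be a matrix with FᵀF = E, and let α_q > 0. Define K(ρ̄) = {y ∈ ℝ^m : pᵀy = 1, y ≥ 0, α_q‖F y_J‖ − cᵀy_J + kᵀy_I ≤ ρ̄}, where y_J, y_I are the subvectors of y indexed by J and I. Then K(ρ̄) = ∅ if and only if both ρ̄ < min_{i∈I} (k_i / p_i) and ρ̄ < max_{‖r‖≤1} min_{j∈J} ((α_q F_{·j}ᵀ r − c_j) / p_j) hold, where F_{·j} denotes the j-th column of F and the max is over r in the closed Euclidean unit ball. -/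
open Matrix

set_option maxHeartbeats 1000000

lemma my_cauchy (n : ℕ) (f g : Fin n → ℝ) :
    ∑ l, f l * g l ≤ Real.sqrt (∑ l, f l ^ 2) * Real.sqrt (∑ l, g l ^ 2) := by
  have h := Finset.sum_mul_sq_le_sq_mul_sq Finset.univ f g
  have h1 : ∑ l, f l * g l ≤ |∑ l, f l * g l| := le_abs_self _
  have h2 : |∑ l, f l * g l| = Real.sqrt ((∑ l, f l * g l) ^ 2) := (Real.sqrt_sq_eq_abs _).symm
  rw [h2] at h1
  refine h1.trans ?_
  rw [← Real.sqrt_mul (by positivity)]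
  exact Real.sqrt_le_sqrt h

lemma exists_min_simplex (m' : ℕ) (hm' : 0 < m') (ψ : (Fin m' → ℝ) → ℝ) (hψ : Continuous ψ) :
    ∃ z : Fin m' → ℝ, (∀ j, 0 ≤ z j) ∧ ∑ j, z j = 1 ∧
      ∀ w : Fin m' → ℝ, (∀ j, 0 ≤ w j) → ∑ j, w j = 1 → ψ z ≤ ψ w := by
  set S : Set (Fin m' → ℝ) := {z | (∀ j, 0 ≤ z j) ∧ ∑ j, z j = 1} with hS
  have hsub : S ⊆ Set.univ.pi (fun _ : Fin m' => Set.Icc (0:ℝ) 1) := by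
    rintro z ⟨hz0, hz1⟩ j _
    refine ⟨hz0 j, ?_⟩
    calc z j ≤ ∑ j', z j' := Finset.single_le_sum (fun i _ => hz0 i) (Finset.mem_univ j)
    _ = 1 := hz1
  have hclosed : IsClosed S := by
    have h1 : IsClosed {z : Fin m' → ℝ | ∀ j, 0 ≤ z j} := by
      have : {z : Fin m' → ℝ | ∀ j, 0 ≤ z j} = ⋂ j, {z | 0 ≤ z j} := by
        ext z; simp
      rw [this]
      exact isClosed_iInter fun j => isClosed_le continuous_const (continuous_apply j)
    have h2 : IsClosed {z : Fin m' → ℝ | ∑ j, z j = 1} :=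
      isClosed_eq (by continuity) continuous_const
    exact h1.inter h2
  have hcomp : IsCompact S :=
    IsCompact.of_isClosed_subset (isCompact_univ_pi fun _ => isCompact_Icc) hclosed hsub
  have hne : S.Nonempty := by
    refine ⟨fun j => if j = ⟨0, hm'⟩ then 1 else 0, fun j => by positivity, ?_⟩
    simp
  obtain ⟨z, hzS, hzmin⟩ := hcomp.exists_isMinOn hne hψ.continuousOn
  exact ⟨z, hzS.1, hzS.2, fun w hw0 hw1 => hzmin ⟨hw0, hw1⟩⟩

lemma core_lemma (m' nr : ℕ) (hm' : 0 < m') (a : Fin m' → Fin nr → ℝ) (β : Fin m' → ℝ)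
    (z : Fin m' → ℝ) (hz0 : ∀ j, 0 ≤ z j) (hz1 : ∑ j, z j = 1)
    (hmin : ∀ w : Fin m' → ℝ, (∀ j, 0 ≤ w j) → ∑ j, w j = 1 →
      Real.sqrt (∑ l, (∑ j, z j * a j l) ^ 2) - ∑ j, z j * β j ≤
      Real.sqrt (∑ l, (∑ j, w j * a j l) ^ 2) - ∑ j, w j * β j)
    (ε : ℝ) (hε : 0 < ε) :
    ∃ r : Fin nr → ℝ, (∑ l, r l ^ 2) ≤ 1 ∧ ∀ j0 : Fin m',
      (Real.sqrt (∑ l, (∑ j, z j * a j l) ^ 2) - ∑ j, z j * β j) - ε ≤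
      (∑ l, a j0 l * r l) - β j0 := by
  have hcont : Continuous (fun w : Fin m' → ℝ =>
      Real.sqrt (ε ^ 2 + ∑ l, (∑ j, w j * a j l) ^ 2) - ∑ j, w j * β j) := by
    apply Continuous.sub
    · apply Real.continuous_sqrt.comp
      apply Continuous.add continuous_const
      apply continuous_finset_sum
      intro l _
      exact (continuous_finset_sum _ fun j _ => (continuous_apply j).mul continuous_const).pow 2
    · exact continuous_finset_sum _ fun j _ => (continuous_apply j).mul continuous_const
  obtain ⟨z0, hz00, hz01, hz0min⟩ := exists_min_simplex m' hm' _ hcont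
  set u : Fin nr → ℝ := fun l => ∑ j, z0 j * a j l with hu
  have hsum_nonneg : (0:ℝ) ≤ ∑ l, u l ^ 2 := by positivity
  set s : ℝ := Real.sqrt (ε ^ 2 + ∑ l, u l ^ 2) with hsdef
  have hs2 : s ^ 2 = ε ^ 2 + ∑ l, u l ^ 2 := Real.sq_sqrt (by positivity)
  have hεs : ε ≤ s := by
    have h := Real.sqrt_le_sqrt (le_add_of_nonneg_right hsum_nonneg : ε ^ 2 ≤ ε ^ 2 + ∑ l, u l ^ 2)
    rwa [Real.sqrt_sq hε.le] at h
  have hs : 0 < s := lt_of_lt_of_le hε hεs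
  refine ⟨fun l => u l / s, ?_, ?_⟩
  · beta_reduce
    have heq : ∑ l, (u l / s) ^ 2 = (∑ l, u l ^ 2) / s ^ 2 := by
      rw [Finset.sum_div]; exact Finset.sum_congr rfl fun l _ => by rw [div_pow]
    rw [heq, div_le_one (by positivity)]
    nlinarith [sq_nonneg ε]
  intro j0
  beta_reduce
  set B0 : ℝ := ∑ j, z0 j * β j with hB0
  set P : ℝ := ∑ l, u l * (a j0 l - u l) with hP
  set Q : ℝ := ∑ l, (a j0 l - u l) ^ 2 with hQ
  have hQ0 : 0 ≤ Q := by rw [hQ]; positivity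
  set D : ℝ := P / s - β j0 + B0 with hD
  set C : ℝ := Q / (2 * s) with hC
  have hC0 : 0 ≤ C := by rw [hC]; positivity
  -- first-order optimality
  have hkey : ∀ t : ℝ, 0 < t → t ≤ 1 → 0 ≤ D + t * C := by
    intro t ht0 ht1
    have h1t : (0:ℝ) ≤ 1 - t := by linarith
    have hw0 : ∀ j, 0 ≤ (1 - t) * z0 j + t * (if j = j0 then (1:ℝ) else 0) := by
      intro j
      have := hz00 j
      positivity
    have hw1 : ∑ j, ((1 - t) * z0 j + t * (if j = j0 then (1:ℝ) else 0)) = 1 := by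
      rw [Finset.sum_add_distrib, ← Finset.mul_sum, ← Finset.mul_sum, hz01,
        Finset.sum_ite_eq' Finset.univ j0 (fun _ => (1:ℝ))]
      simp
    have hA : ∀ l, ∑ j, ((1 - t) * z0 j + t * (if j = j0 then (1:ℝ) else 0)) * a j l
        = u l + t * (a j0 l - u l) := by
      intro l
      have step : ∀ j, ((1 - t) * z0 j + t * (if j = j0 then (1:ℝ) else 0)) * a j l
          = (1 - t) * (z0 j * a j l) + t * (if j = j0 then a j l else 0) := by
        intro j; split <;> ring
      rw [Finset.sum_congr rfl fun j _ => step j, Finset.sum_add_distrib,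
        ← Finset.mul_sum, ← Finset.mul_sum,
        Finset.sum_ite_eq' Finset.univ j0 (fun j => a j l)]
      simp only [Finset.mem_univ, if_true, hu]
      ring
    have hB : ∑ j, ((1 - t) * z0 j + t * (if j = j0 then (1:ℝ) else 0)) * β j
        = B0 + t * (β j0 - B0) := by
      have step : ∀ j, ((1 - t) * z0 j + t * (if j = j0 then (1:ℝ) else 0)) * β j
          = (1 - t) * (z0 j * β j) + t * (if j = j0 then β j else 0) := by
        intro j; split <;> ring
      rw [Finset.sum_congr rfl fun j _ => step j, Finset.sum_add_distrib,
        ← Finset.mul_sum, ← Finset.mul_sum,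
        Finset.sum_ite_eq' Finset.univ j0 β]
      simp only [Finset.mem_univ, if_true, hB0]
      ring
    have hexp : ε ^ 2 + ∑ l, (∑ j, ((1 - t) * z0 j + t * (if j = j0 then (1:ℝ) else 0)) * a j l) ^ 2
        = s ^ 2 + (2 * t * P + t ^ 2 * Q) := by
      rw [Finset.sum_congr rfl fun l _ => by rw [hA l]]
      rw [Finset.sum_congr rfl (fun l (_ : l ∈ Finset.univ) =>
        show (u l + t * (a j0 l - u l)) ^ 2 =
          u l ^ 2 + (2 * t) * (u l * (a j0 l - u l)) + t ^ 2 * (a j0 l - u l) ^ 2 from by ring)]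
      rw [Finset.sum_add_distrib, Finset.sum_add_distrib, ← Finset.mul_sum, ← Finset.mul_sum,
        ← hP, ← hQ, hs2]
      ring
    have hmin0 := hz0min _ hw0 hw1
    rw [hexp, hB] at hmin0
    have hs2h : (0:ℝ) ≤ s ^ 2 + (2 * t * P + t ^ 2 * Q) := by
      rw [← hexp]; positivity
    have hdiv : 2 * s * ((2 * t * P + t ^ 2 * Q) / (2 * s)) = 2 * t * P + t ^ 2 * Q := by
      field_simp
    have hsqrt : Real.sqrt (s ^ 2 + (2 * t * P + t ^ 2 * Q))
        ≤ s + (2 * t * P + t ^ 2 * Q) / (2 * s) := by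
      rw [Real.sqrt_le_iff]
      constructor
      · nlinarith [hdiv, hs2h, hs, mul_pos hs hs]
      · nlinarith [hdiv, sq_nonneg ((2 * t * P + t ^ 2 * Q) / (2 * s))]
    have h2 : 0 ≤ (2 * t * P + t ^ 2 * Q) / (2 * s) - t * (β j0 - B0) := by
      linarith [hmin0, hsqrt]
    have h3 : (2 * t * P + t ^ 2 * Q) / (2 * s) = t * (P / s) + t ^ 2 * C := by
      rw [hC]; field_simp
    rw [h3] at h2
    have h4 : 0 ≤ t * (D + t * C) := by rw [hD]; nlinarith [h2]
    nlinarith [h4, ht0]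
  have hD0 : 0 ≤ D := by
    by_contra hDneg
    push_neg at hDneg
    have hDpos : (0:ℝ) < -D := by linarith
    have hpos : (0:ℝ) < -D / (2 * C + 1) := div_pos hDpos (by positivity)
    have ht := hkey (min 1 (-D / (2 * C + 1))) (lt_min one_pos hpos) (min_le_left _ _)
    have h5 : min 1 (-D / (2 * C + 1)) ≤ -D / (2 * C + 1) := min_le_right _ _
    have h6 : 0 < min 1 (-D / (2 * C + 1)) := lt_min one_pos hpos
    have h7 : (-D / (2 * C + 1)) * (2 * C + 1) = -D := by field_simp
    nlinarith [ht, h7, mul_le_mul_of_nonneg_left h5 hC0, mul_nonneg hpos.le hC0, hpos, hC0]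
  clear_value u s B0 P Q D C
  -- conclude
  have hPu : ∑ l, a j0 l * u l = P + ∑ l, u l ^ 2 := by
    rw [hP, ← Finset.sum_add_distrib]
    exact Finset.sum_congr rfl fun l _ => by ring
  have e1 : ∑ l, a j0 l * (u l / s) = P / s + (∑ l, u l ^ 2) / s := by
    calc ∑ l, a j0 l * (u l / s) = ∑ l, (a j0 l * u l) / s :=
          Finset.sum_congr rfl fun l _ => (mul_div_assoc _ _ _).symm
      _ = (∑ l, a j0 l * u l) / s := (Finset.sum_div _ _ _).symm
      _ = (P + ∑ l, u l ^ 2) / s := by rw [hPu]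
      _ = P / s + (∑ l, u l ^ 2) / s := add_div _ _ _
  have e2 : (∑ l, u l ^ 2) / s = s - ε ^ 2 / s := by
    rw [show (∑ l, u l ^ 2) = s ^ 2 - ε ^ 2 from by linarith [hs2]]
    field_simp
  have e3 : ε ^ 2 / s ≤ ε := by
    rw [div_le_iff₀ hs]
    nlinarith
  have e4 : Real.sqrt (∑ l, u l ^ 2) ≤ s := by
    rw [hsdef]
    exact Real.sqrt_le_sqrt (le_add_of_nonneg_left (sq_nonneg ε))
  have e5 : Real.sqrt (∑ l, (∑ j, z j * a j l) ^ 2) - ∑ j, z j * β j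
      ≤ Real.sqrt (∑ l, u l ^ 2) - B0 := by
    simpa only [hu, hB0] using hmin z0 hz00 hz01
  rw [e1]
  have : P / s = D + β j0 - B0 := by rw [hD]; ring
  linarith [e5, e4, e3, e2, hD0, this]

/-- Proposition 1: controllability criterion for pure stock portfolios.
With the index set `{1,…,m}` partitioned into nonempty `J` (of size `m'`) and `I` (of size
`mI`), stock prices `p > 0`, data `k`, `c`, a positive semidefinite matrix `E = FᵀF` and
`α_q > 0`, the feasible set
`K(ρ̄) = {y : pᵀy = 1, y ≥ 0, α_q‖F y_J‖ - cᵀy_J + kᵀy_I ≤ ρ̄}` is empty if and only if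
`ρ̄ < min_{i∈I} k_i/p_i` and `ρ̄ < max_{‖r‖≤1} min_{j∈J} (α_q F_{·j}ᵀ r - c_j)/p_j`. -/
theorem stock_portfolio_controllability (m' mI nr : ℕ) (hm' : 0 < m') (hmI : 0 < mI)
    (pJ : Fin m' → ℝ) (pI : Fin mI → ℝ) (hpJ : ∀ j, 0 < pJ j) (hpI : ∀ i, 0 < pI i)
    (k : Fin mI → ℝ) (c : Fin m' → ℝ)
    (E : Matrix (Fin m') (Fin m') ℝ) (hE : E.PosSemidef)
    (F : Matrix (Fin nr) (Fin m') ℝ) (hF : Fᵀ * F = E)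
    (αq : ℝ) (hαq : 0 < αq) (ρbar : ℝ) :
    (¬ ∃ (yJ : Fin m' → ℝ) (yI : Fin mI → ℝ),
        (∑ j, pJ j * yJ j) + (∑ i, pI i * yI i) = 1 ∧
        (∀ j, 0 ≤ yJ j) ∧ (∀ i, 0 ≤ yI i) ∧
        αq * Real.sqrt (∑ r, (∑ j, F r j * yJ j) ^ 2)
          - (∑ j, c j * yJ j) + (∑ i, k i * yI i) ≤ ρbar) ↔
      (ρbar < ⨅ i, k i / pI i ∧
        ρbar < ⨆ r : {r : Fin nr → ℝ // ∑ l, r l ^ 2 ≤ 1},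
          ⨅ j, (αq * (∑ l, F l j * (r : Fin nr → ℝ) l) - c j) / pJ j) := by
  haveI hneI : Nonempty (Fin mI) := Fin.pos_iff_nonempty.mp hmI
  haveI hneJ : Nonempty (Fin m') := Fin.pos_iff_nonempty.mp hm'
  haveI hneB : Nonempty {r : Fin nr → ℝ // ∑ l, r l ^ 2 ≤ 1} :=
    ⟨⟨fun _ => 0, by simp⟩⟩
  -- boundedness of the sup family
  have hbdd : BddAbove (Set.range (fun r : {r : Fin nr → ℝ // ∑ l, r l ^ 2 ≤ 1} =>
      ⨅ j, (αq * (∑ l, F l j * (r : Fin nr → ℝ) l) - c j) / pJ j)) := by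
    set j0 : Fin m' := ⟨0, hm'⟩
    refine ⟨(αq * Real.sqrt (∑ l, F l j0 ^ 2) + |c j0|) / pJ j0, ?_⟩
    rintro x ⟨⟨r, hr⟩, rfl⟩
    have step1 : (⨅ j, (αq * (∑ l, F l j * r l) - c j) / pJ j)
        ≤ (αq * (∑ l, F l j0 * r l) - c j0) / pJ j0 :=
      ciInf_le (Set.Finite.bddBelow (Set.finite_range _)) j0
    refine step1.trans ?_
    have hc := my_cauchy nr (fun l => F l j0) r
    beta_reduce at hc
    have hr1 : Real.sqrt (∑ l, r l ^ 2) ≤ 1 := by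
      have := Real.sqrt_le_sqrt hr
      rwa [Real.sqrt_one] at this
    have hA0 : (0:ℝ) ≤ Real.sqrt (∑ l, F l j0 ^ 2) := Real.sqrt_nonneg _
    have hS : ∑ l, F l j0 * r l ≤ Real.sqrt (∑ l, F l j0 ^ 2) := by
      nlinarith [mul_le_mul_of_nonneg_left hr1 hA0]
    have hS2 : αq * (∑ l, F l j0 * r l) ≤ αq * Real.sqrt (∑ l, F l j0 ^ 2) :=
      mul_le_mul_of_nonneg_left hS hαq.le
    gcongr
    · exact (hpJ j0).le
    · linarith [neg_abs_le (c j0)]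
  constructor
  · -- emptiness implies the two strict inequalities
    intro hempty
    constructor
    · by_contra hcon
      push_neg at hcon
      exact hempty (by
        obtain ⟨i0, hi0⟩ := Finite.exists_min (fun i => k i / pI i)
        have hVI : (⨅ i, k i / pI i) = k i0 / pI i0 :=
          le_antisymm (ciInf_le (Set.Finite.bddBelow (Set.finite_range _)) i0) (le_ciInf hi0)
        refine ⟨0, fun i => if i = i0 then 1 / pI i0 else 0, ?_, fun j => le_refl 0, ?_, ?_⟩
        · rw [Finset.sum_congr rfl (fun i (_ : i ∈ Finset.univ) =>
            show pI i * (if i = i0 then 1 / pI i0 else 0)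
              = if i = i0 then pI i * (1 / pI i0) else 0 from by split <;> simp),
            Finset.sum_ite_eq' Finset.univ i0 (fun i => pI i * (1 / pI i0))]
          have := (hpI i0).ne'
          simp
          field_simp
        · intro i
          have := (hpI i0).le
          positivity
        · rw [Finset.sum_congr rfl (fun i (_ : i ∈ Finset.univ) =>
            show k i * (if i = i0 then 1 / pI i0 else 0)
              = if i = i0 then k i * (1 / pI i0) else 0 from by split <;> simp),
            Finset.sum_ite_eq' Finset.univ i0 (fun i => k i * (1 / pI i0))]
          simp only [Pi.zero_apply, mul_zero, Finset.sum_const_zero, Finset.mem_univ, if_true]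
          rw [show (∑ _x : Fin nr, ((0:ℝ)) ^ 2) = (0:ℝ) from by simp, Real.sqrt_zero]
          have hki : k i0 * (1 / pI i0) = k i0 / pI i0 := by ring
          rw [hki]
          rw [hVI] at hcon
          linarith)
    · by_contra hcon
      push_neg at hcon
      refine hempty ?_
      -- minimize the J-part objective over the simplex
      have hcont2 : Continuous (fun w : Fin m' → ℝ =>
          Real.sqrt (∑ l, (∑ j, w j * (αq * F l j / pJ j)) ^ 2) - ∑ j, w j * (c j / pJ j)) := by
        apply Continuous.sub
        · apply Real.continuous_sqrt.comp
          apply continuous_finset_sum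
          intro l _
          exact (continuous_finset_sum _ fun j _ =>
            (continuous_apply j).mul continuous_const).pow 2
        · exact continuous_finset_sum _ fun j _ => (continuous_apply j).mul continuous_const
      obtain ⟨z, hz0, hz1, hzmin⟩ := exists_min_simplex m' hm' _ hcont2
      -- ψz is below the sup
      have hψsup : Real.sqrt (∑ l, (∑ j, z j * (αq * F l j / pJ j)) ^ 2)
          - ∑ j, z j * (c j / pJ j) ≤ ⨆ r : {r : Fin nr → ℝ // ∑ l, r l ^ 2 ≤ 1},
          ⨅ j, (αq * (∑ l, F l j * (r : Fin nr → ℝ) l) - c j) / pJ j := by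
        refine le_of_forall_pos_le_add ?_
        intro ε hε
        obtain ⟨r, hr, hrall⟩ := core_lemma m' nr hm' (fun j l => αq * F l j / pJ j)
          (fun j => c j / pJ j) z hz0 hz1 hzmin ε hε
        have h6 : (Real.sqrt (∑ l, (∑ j, z j * (αq * F l j / pJ j)) ^ 2)
            - ∑ j, z j * (c j / pJ j)) - ε ≤ ⨅ j, (αq * (∑ l, F l j * r l) - c j) / pJ j := by
          refine le_ciInf fun j => ?_
          have h7 := hrall j
          beta_reduce at h7
          have heq : (αq * (∑ l, F l j * r l) - c j) / pJ j
              = (∑ l, αq * F l j / pJ j * r l) - c j / pJ j := by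
            rw [sub_div, Finset.mul_sum, Finset.sum_div]
            congr 1
            exact Finset.sum_congr rfl fun l _ => by ring
          rw [heq]
          exact h7
        have h8 := le_ciSup hbdd (⟨r, hr⟩ : {r : Fin nr → ℝ // ∑ l, r l ^ 2 ≤ 1})
        have h9 : (Real.sqrt (∑ l, (∑ j, z j * (αq * F l j / pJ j)) ^ 2)
            - ∑ j, z j * (c j / pJ j)) - ε ≤ ⨆ r : {r : Fin nr → ℝ // ∑ l, r l ^ 2 ≤ 1},
            ⨅ j, (αq * (∑ l, F l j * (r : Fin nr → ℝ) l) - c j) / pJ j := le_trans h6 h8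
        linarith
      -- the feasible point built from z
      refine ⟨fun j => z j / pJ j, 0, ?_, fun j => div_nonneg (hz0 j) (hpJ j).le, fun i => le_refl 0, ?_⟩
      · rw [Finset.sum_congr rfl (fun j (_ : j ∈ Finset.univ) =>
          show pJ j * (z j / pJ j) = z j from by rw [mul_comm, div_mul_cancel₀ _ (hpJ j).ne'])]
        simp [hz1]
      · have hval : αq * Real.sqrt (∑ l, (∑ j, F l j * (z j / pJ j)) ^ 2)
            - ∑ j, c j * (z j / pJ j) + ∑ i, k i * (0 : Fin mI → ℝ) i
            = Real.sqrt (∑ l, (∑ j, z j * (αq * F l j / pJ j)) ^ 2)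
              - ∑ j, z j * (c j / pJ j) := by
          have hin : ∀ l, ∑ j, z j * (αq * F l j / pJ j)
              = αq * ∑ j, F l j * (z j / pJ j) := by
            intro l
            rw [Finset.mul_sum]
            exact Finset.sum_congr rfl fun j _ => by ring
          have e : (∑ l, (∑ j, z j * (αq * F l j / pJ j)) ^ 2)
              = αq ^ 2 * ∑ l, (∑ j, F l j * (z j / pJ j)) ^ 2 := by
            rw [Finset.mul_sum]
            exact Finset.sum_congr rfl fun l _ => by rw [hin l]; ring
          rw [e, Real.sqrt_mul (sq_nonneg αq) _, Real.sqrt_sq hαq.le]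
          have e2 : ∑ j, z j * (c j / pJ j) = ∑ j, c j * (z j / pJ j) :=
            Finset.sum_congr rfl fun j _ => by ring
          rw [e2]
          simp
        rw [hval]
        linarith [hψsup, hcon]
  · -- the two strict inequalities imply emptiness
    rintro ⟨h1, h2⟩ ⟨yJ, yI, hsum, hyJ0, hyI0, hobj⟩
    obtain ⟨rs, hrlt⟩ := exists_lt_of_lt_ciSup h2
    have hjs : ∀ j, ρbar * pJ j < αq * (∑ l, F l j * rs.1 l) - c j := by
      intro j
      have := lt_of_lt_of_le hrlt (ciInf_le (Set.Finite.bddBelow (Set.finite_range _)) j)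
      exact (lt_div_iff₀ (hpJ j)).mp this
    have his : ∀ i, ρbar * pI i < k i := by
      intro i
      have := lt_of_lt_of_le h1 (ciInf_le (Set.Finite.bddBelow (Set.finite_range _)) i)
      exact (lt_div_iff₀ (hpI i)).mp this
    -- Cauchy–Schwarz
    have hcs : ∑ l, rs.1 l * (∑ j, F l j * yJ j)
        ≤ Real.sqrt (∑ l, (∑ j, F l j * yJ j) ^ 2) := by
      have hc := my_cauchy nr rs.1 (fun l => ∑ j, F l j * yJ j)
      beta_reduce at hc
      have hr1 : Real.sqrt (∑ l, rs.1 l ^ 2) ≤ 1 := by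
        have := Real.sqrt_le_sqrt rs.2
        rwa [Real.sqrt_one] at this
      nlinarith [Real.sqrt_nonneg (∑ l, (∑ j, F l j * yJ j) ^ 2)]
    have hswap : ∑ l, rs.1 l * (∑ j, F l j * yJ j) = ∑ j, yJ j * (∑ l, F l j * rs.1 l) := by
      calc ∑ l, rs.1 l * (∑ j, F l j * yJ j) = ∑ l, ∑ j, rs.1 l * (F l j * yJ j) :=
            Finset.sum_congr rfl fun l _ => Finset.mul_sum _ _ _
        _ = ∑ j, ∑ l, rs.1 l * (F l j * yJ j) := Finset.sum_comm
        _ = ∑ j, yJ j * (∑ l, F l j * rs.1 l) := Finset.sum_congr rfl fun j _ => by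
            rw [Finset.mul_sum]
            exact Finset.sum_congr rfl fun l _ => by ring
    have hexpand : ∑ j, yJ j * (αq * (∑ l, F l j * rs.1 l) - c j)
        = αq * (∑ j, yJ j * (∑ l, F l j * rs.1 l)) - ∑ j, c j * yJ j := by
      rw [Finset.sum_congr rfl (fun j (_ : j ∈ Finset.univ) =>
        show yJ j * (αq * (∑ l, F l j * rs.1 l) - c j)
          = αq * (yJ j * (∑ l, F l j * rs.1 l)) - c j * yJ j from by ring),
        Finset.sum_sub_distrib, ← Finset.mul_sum]
    have hIk : ∑ i, yI i * k i = ∑ i, k i * yI i :=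
      Finset.sum_congr rfl fun i _ => mul_comm _ _
    have hcs' : αq * (∑ l, rs.1 l * (∑ j, F l j * yJ j))
        ≤ αq * Real.sqrt (∑ l, (∑ j, F l j * yJ j) ^ 2) :=
      mul_le_mul_of_nonneg_left hcs hαq.le
    have hswap' : αq * (∑ l, rs.1 l * (∑ j, F l j * yJ j))
        = αq * (∑ j, yJ j * (∑ l, F l j * rs.1 l)) := by rw [hswap]
    have hre : ρbar = ∑ j, ρbar * (pJ j * yJ j) + ∑ i, ρbar * (pI i * yI i) := by
      rw [← Finset.mul_sum, ← Finset.mul_sum, ← mul_add, hsum, mul_one]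
    have hJle : ∀ j, ρbar * (pJ j * yJ j) ≤ yJ j * (αq * (∑ l, F l j * rs.1 l) - c j) := by
      intro j
      calc ρbar * (pJ j * yJ j) = (ρbar * pJ j) * yJ j := by ring
        _ ≤ (αq * (∑ l, F l j * rs.1 l) - c j) * yJ j :=
            mul_le_mul_of_nonneg_right (hjs j).le (hyJ0 j)
        _ = yJ j * (αq * (∑ l, F l j * rs.1 l) - c j) := mul_comm _ _
    have hIle : ∀ i, ρbar * (pI i * yI i) ≤ yI i * k i := by
      intro i
      calc ρbar * (pI i * yI i) = (ρbar * pI i) * yI i := by ring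
        _ ≤ k i * yI i := mul_le_mul_of_nonneg_right (his i).le (hyI0 i)
        _ = yI i * k i := mul_comm _ _
    by_cases hj : ∃ j0, 0 < yJ j0
    · obtain ⟨j0, hj0⟩ := hj
      have hlt1 : ∑ j, ρbar * (pJ j * yJ j) < ∑ j, yJ j * (αq * (∑ l, F l j * rs.1 l) - c j) := by
        refine Finset.sum_lt_sum (fun j _ => hJle j) ⟨j0, Finset.mem_univ j0, ?_⟩
        calc ρbar * (pJ j0 * yJ j0) = (ρbar * pJ j0) * yJ j0 := by ring
          _ < (αq * (∑ l, F l j0 * rs.1 l) - c j0) * yJ j0 :=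
              mul_lt_mul_of_pos_right (hjs j0) hj0
          _ = yJ j0 * (αq * (∑ l, F l j0 * rs.1 l) - c j0) := mul_comm _ _
      have hle2 : ∑ i, ρbar * (pI i * yI i) ≤ ∑ i, yI i * k i :=
        Finset.sum_le_sum fun i _ => hIle i
      linarith
    · push_neg at hj
      have hJ0 : ∀ j, yJ j = 0 := fun j => le_antisymm (hj j) (hyJ0 j)
      have hsumJ : ∑ j, pJ j * yJ j = 0 :=
        Finset.sum_eq_zero fun j _ => by rw [hJ0 j, mul_zero]
      have hsumI : ∑ i, pI i * yI i = 1 := by linarith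
      have hex : ∃ i0, (0:ℝ) < pI i0 * yI i0 := by
        by_contra hno
        push_neg at hno
        have : ∑ i, pI i * yI i ≤ 0 := Finset.sum_nonpos fun i _ => hno i
        linarith
      obtain ⟨i0, hi0⟩ := hex
      have hyi0 : 0 < yI i0 := by nlinarith [hpI i0, hyI0 i0]
      have hlt2 : ∑ i, ρbar * (pI i * yI i) < ∑ i, yI i * k i := by
        refine Finset.sum_lt_sum (fun i _ => hIle i) ⟨i0, Finset.mem_univ i0, ?_⟩
        calc ρbar * (pI i0 * yI i0) = (ρbar * pI i0) * yI i0 := by ring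
          _ < k i0 * yI i0 := mul_lt_mul_of_pos_right (his i0) hyi0
          _ = yI i0 * k i0 := mul_comm _ _
      have hle1 : ∑ j, ρbar * (pJ j * yJ j) ≤ ∑ j, yJ j * (αq * (∑ l, F l j * rs.1 l) - c j) :=
        Finset.sum_le_sum fun j _ => hJle j
      linarith
end

section
/- Let p, q ∈ (1/2, 1), σ₁₁, σ₂₂ > 0, μ₁, μ₂ ∈ ℝ, ρ ∈ (−1, 1), and y₁ ∈ ℝ, y₂ ≥ 0. Let k₁ = α_p√σ₁₁ − μ₁, and let X be a real random variable with law N(c₂, e₂₂), where c₂ = μ₂ − ρ α_p √σ₂₂ and e₂₂ = σ₂₂(1 − ρ²). Define W = −k₁ y₁ + y₂ X. Then inf{a ∈ ℝ : P(−W ≥ a) ≤ 1 − q} = (ψ√σ₂₂ − μ₂) y₂ + (α_p√σ₁₁ − μ₁) y₁, where ψ = α_q√(1 − ρ²) + α_p ρ. -/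
/-!
Given stock 1's distress, the loss `-W = k₁y₁ - y₂X` is an affine image of the Gaussian `X`, hence
Gaussian with mean `k₁y₁ - y₂c₂` and standard deviation `y₂√e₂₂` (a Dirac mass when `y₂ = 0`).
For a loss `L ~ N(m, v)` with `v ≠ 0`, `P(L ≥ a) = 1 - Φ((a - m)/√v)`, and as `Φ` is strictly
increasing this is at most `1 - q = 1 - Φ(α_q)` exactly when `a ≥ m + α_q√v`; so the infimum is
`m + α_q√v`, which for the law of `-W` is the claimed expression since `√e₂₂ = √σ₂₂ √(1 - ρ²)`.
-/

open MeasureTheory ProbabilityTheory Set NNReal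

lemma strictMono_cdf_of_absolutelyContinuous {μ : Measure ℝ} [IsProbabilityMeasure μ]
    (h : volume ≪ μ) : StrictMono (cdf μ) := by
  intro x y hxy
  have hIoc : μ (Ioc x y) ≠ 0 := fun h0 => hxy.not_ge (by simpa using h h0)
  have hcdf := (cdf μ).measure_Ioc x y
  rw [measure_cdf] at hcdf
  rwa [hcdf, ne_eq, ENNReal.ofReal_eq_zero, not_le, sub_pos] at hIoc

lemma measure_Ici_eq_ofReal_one_sub_cdf (μ : Measure ℝ) [IsProbabilityMeasure μ]
    [NullSingletonClass μ] (x : ℝ) : μ (Ici x) = ENNReal.ofReal (1 - cdf μ x) := by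
  rw [← compl_Iio, prob_compl_eq_one_sub measurableSet_Iio, measure_congr Iio_ae_eq_Iic,
    ← ofReal_cdf, ENNReal.ofReal_sub _ (cdf_nonneg μ x), ENNReal.ofReal_one]

lemma gaussianReal_map_standardize (m : ℝ) {v : ℝ≥0} (hv : v ≠ 0) :
    (gaussianReal m v).map (fun x => (x - m) / √v) = gaussianReal 0 1 := by
  change (gaussianReal m v).map ((· / √v) ∘ (· - m)) = _
  rw [← Measure.map_map (by fun_prop) (by fun_prop), gaussianReal_map_sub_const,
    gaussianReal_map_div_const, sub_self, zero_div]
  congr 1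
  ext
  simp [hv]

lemma cdf_gaussianReal (m : ℝ) {v : ℝ≥0} (hv : v ≠ 0) (x : ℝ) :
    cdf (gaussianReal m v) x = cdf (gaussianReal 0 1) ((x - m) / √v) := by
  have hsv : 0 < √(v : ℝ) := by positivity
  rw [cdf_eq_real, cdf_eq_real, ← gaussianReal_map_standardize m hv,
    map_measureReal_apply (by fun_prop) measurableSet_Iic]
  congr 1
  ext y
  simp [div_le_div_iff_of_pos_right hsv]

lemma Real.sqrt_coe_toNNReal (x : ℝ) : √(x.toNNReal : ℝ) = √x := by
  rw [Real.sqrt, Real.sqrt, Real.toNNReal_coe]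

/-- Applied to the conditional law of the portfolio loss `-W`, this is the paper's CoVaR. -/
noncomputable def valueAtRisk (μ : Measure ℝ) (q : ℝ) : ℝ :=
  sInf {a | μ (Ici a) ≤ ENNReal.ofReal (1 - q)}

lemma ProbabilityTheory.HasLaw.sInf_measure_ge_le {Ω : Type*} [MeasurableSpace Ω]
    {P : Measure Ω} {L : Ω → ℝ} {μ : Measure ℝ} (hL : HasLaw L μ P) (q : ℝ) :
    sInf {a | P {ω | L ω ≥ a} ≤ ENNReal.ofReal (1 - q)} = valueAtRisk μ q := by
  simp only [valueAtRisk, ← hL.map_eq,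
    Measure.map_apply_of_aemeasurable hL.aemeasurable measurableSet_Ici]
  rfl

lemma valueAtRisk_dirac (m : ℝ) {q : ℝ} (hq : 0 < q) : valueAtRisk (Measure.dirac m) q = m := by
  have hset : {a | Measure.dirac m (Ici a) ≤ ENNReal.ofReal (1 - q)} = Ioi m := by
    ext a
    by_cases ham : a ≤ m
    · simp [ham, hq.not_ge]
    · simp [ham, not_le.mp ham]
  rw [valueAtRisk, hset, csInf_Ioi]

lemma valueAtRisk_gaussianReal (m : ℝ) (v : ℝ≥0) {q α : ℝ} (hq : q ∈ Ioo 0 1)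
    (hα : cdf (gaussianReal 0 1) α = q) : valueAtRisk (gaussianReal m v) q = m + α * √v := by
  rcases eq_or_ne v 0 with rfl | hv
  · simpa using valueAtRisk_dirac m hq.1
  have := nullSingletonClass_gaussianReal (μ := m) hv
  have hα' : cdf (gaussianReal m v) (m + α * √v) = q := by
    rw [cdf_gaussianReal m hv, add_sub_cancel_left, mul_div_cancel_right₀ _ (by positivity), hα]
  have hset : {a | gaussianReal m v (Ici a) ≤ ENNReal.ofReal (1 - q)} = Ici (m + α * √v) := by
    ext a
    rw [mem_ofPred_eq, measure_Ici_eq_ofReal_one_sub_cdf,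
      ENNReal.ofReal_le_ofReal_iff (by linarith [hq.2]), sub_le_sub_iff_left, ← hα',
      (strictMono_cdf_of_absolutelyContinuous (gaussianReal_absolutelyContinuous' m hv)).le_iff_le,
      mem_Ici]
  rw [valueAtRisk, hset, csInf_Ici]

theorem covar_two_stocks_general {Ω : Type*} [MeasureSpace Ω]
    (q : ℝ) (hq : q ∈ Set.Ioo (1/2 : ℝ) 1)
    (σ11 σ22 : ℝ) (h22 : 0 < σ22)
    (μ1 μ2 : ℝ) (ρ : ℝ)
    (y1 y2 : ℝ) (hy2 : 0 ≤ y2)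
    (αp αq : ℝ) (hαq : cdf (gaussianReal 0 1) αq = q)
    (X : Ω → ℝ) (hX : Measurable X)
    (hlaw : Measure.map X ℙ =
      gaussianReal (μ2 - ρ * αp * Real.sqrt σ22) ((σ22 * (1 - ρ ^ 2)).toNNReal))
    (W : Ω → ℝ) (hW : ∀ ω, W ω = -(αp * Real.sqrt σ11 - μ1) * y1 + y2 * X ω) :
    sInf {a : ℝ | ℙ {ω | -W ω ≥ a} ≤ ENNReal.ofReal (1 - q)} =
      ((αq * Real.sqrt (1 - ρ ^ 2) + αp * ρ) * Real.sqrt σ22 - μ2) * y2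
        + (αp * Real.sqrt σ11 - μ1) * y1 := by
  have hloss := gaussianReal_const_add (gaussianReal_const_mul ⟨hX.aemeasurable, hlaw⟩ (-y2))
    ((αp * √σ11 - μ1) * y1)
  have hneg : (fun ω => (αp * √σ11 - μ1) * y1 + -y2 * X ω) = fun ω => -W ω := by
    ext ω
    rw [hW]
    ring
  rw [hneg] at hloss
  rw [hloss.sInf_measure_ge_le, valueAtRisk_gaussianReal _ _ ⟨by linarith [hq.1], hq.2⟩ hαq,
    NNReal.coe_mul, NNReal.coe_mk, Real.sqrt_mul (sq_nonneg _), neg_sq, Real.sqrt_sq hy2,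
    Real.sqrt_coe_toNNReal, Real.sqrt_mul h22.le]
  ring

/-- equation (6) of the paper: CoVaR of a two-stock portfolio given that
stock 1 is distressed. With `k₁ = α_p√σ₁₁ - μ₁`, `X ~ N(μ₂ - ρα_p√σ₂₂, σ₂₂(1-ρ²))` and
`W = -k₁y₁ + y₂X`, one has
`inf {a : P(-W ≥ a) ≤ 1 - q} = (ψ√σ₂₂ - μ₂)y₂ + (α_p√σ₁₁ - μ₁)y₁` where
`ψ = α_q√(1-ρ²) + α_pρ`. -/
theorem covar_two_stocks {Ω : Type*} [MeasureSpace Ω] [IsProbabilityMeasure (ℙ : Measure Ω)]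
    (p q : ℝ) (hp : p ∈ Set.Ioo (1/2 : ℝ) 1) (hq : q ∈ Set.Ioo (1/2 : ℝ) 1)
    (σ11 σ22 : ℝ) (h11 : 0 < σ11) (h22 : 0 < σ22)
    (μ1 μ2 : ℝ) (ρ : ℝ) (hρ : ρ ∈ Set.Ioo (-1 : ℝ) 1)
    (y1 y2 : ℝ) (hy2 : 0 ≤ y2)
    (αp αq : ℝ) (hαp : cdf (gaussianReal 0 1) αp = p) (hαq : cdf (gaussianReal 0 1) αq = q)
    (X : Ω → ℝ) (hX : Measurable X)
    (hlaw : Measure.map X ℙ =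
      gaussianReal (μ2 - ρ * αp * Real.sqrt σ22) ((σ22 * (1 - ρ ^ 2)).toNNReal))
    (W : Ω → ℝ) (hW : ∀ ω, W ω = -(αp * Real.sqrt σ11 - μ1) * y1 + y2 * X ω) :
    sInf {a : ℝ | ℙ {ω | -W ω ≥ a} ≤ ENNReal.ofReal (1 - q)} =
      ((αq * Real.sqrt (1 - ρ ^ 2) + αp * ρ) * Real.sqrt σ22 - μ2) * y2
        + (αp * Real.sqrt σ11 - μ1) * y1 :=
  covar_two_stocks_general q hq σ11 σ22 h22 μ1 μ2 ρ y1 y2 hy2 αp αq hαq X hX hlaw W hW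
end

section
/- Let Z₁, Z₂ be independent standard normal random variables, μ₁, μ₂ ∈ ℝ, σ₁₁, σ₂₂ > 0, ρ ∈ [−1,1], and set X₁ = μ₁ + √σ₁₁ Z₁, X₂ = μ₂ + √σ₂₂(ρZ₁ + √(1−ρ²) Z₂). For i = 1,2 let Δφᵢ = δᵢXᵢ + (1/2)γᵢXᵢ² + θᵢΔt with δᵢ, γᵢ, θᵢ ∈ ℝ, Δt > 0, and assume (γᵢ, δᵢ + γᵢμᵢ) ≠ (0,0) for i = 1,2 (so that Var(Δφᵢ) > 0). Then |Corr(Δφ₁, Δφ₂)| ≤ |ρ|, where Corr(U,V) = Cov(U,V)/√(Var(U)Var(V)). -/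
/-!
Write `Z₁, Z₂` for the independent standard Gaussians and `W = ρ Z₁ + √(1 - ρ²) Z₂`, again a
standard Gaussian. Each optioned asset is a quadratic polynomial in one standard Gaussian:
`Δφ₁ = a₁ Z₁² + b₁ Z₁ + c₁` and `Δφ₂ = a₂ W² + b₂ W + c₂`. The moments `1, 0, 1, 0, 3` of a standard
Gaussian give `Var (a Z² + b Z + c) = 2 a² + b²` and `Cov (a Z² + b Z + c, a' Z² + b' Z + c') =
2 a a' + b b'`. Integrating out `Z₂` replaces `W` by `ρ Z₁` and `W²` by `ρ² Z₁² + 1 - ρ²`, so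
`Cov (Δφ₁, Δφ₂) = ρ (2 a₁ a₂ ρ + b₁ b₂)`, and by Cauchy–Schwarz and `|ρ| ≤ 1` the second factor is
at most `√(Var Δφ₁ · Var Δφ₂)` in absolute value.
-/

open MeasureTheory ProbabilityTheory

/-- Covariance `Cov(U,V) = E[UV] - E[U]E[V]` (with respect to the ambient probability
measure `ℙ`). -/
noncomputable def cov {Ω : Type*} [MeasureSpace Ω] (U V : Ω → ℝ) : ℝ :=
  (∫ ω, U ω * V ω) - (∫ ω, U ω) * (∫ ω, V ω)

open Polynomial
open scoped NNReal

lemma hasDerivAt_eval_mul_exp_sq_div_two (p : ℝ[X]) (t : ℝ) :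
    HasDerivAt (fun t ↦ p.eval t * Real.exp (t ^ 2 / 2))
      ((derivative p + X * p).eval t * Real.exp (t ^ 2 / 2)) t := by
  have hexp : HasDerivAt (fun t : ℝ ↦ Real.exp (t ^ 2 / 2)) (t * Real.exp (t ^ 2 / 2)) t := by
    convert ((hasDerivAt_pow 2 t).div_const 2).exp using 1
    ring
  refine ((p.hasDerivAt t).mul hexp).congr_deriv ?_
  simp only [eval_add, eval_mul, eval_X]
  ring

lemma iteratedDeriv_exp_sq_div_two (n : ℕ) :
    iteratedDeriv n (fun t : ℝ ↦ Real.exp (t ^ 2 / 2)) =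
      fun t ↦ ((fun p ↦ derivative p + X * p)^[n] 1).eval t * Real.exp (t ^ 2 / 2) := by
  induction n with
  | zero => simp
  | succ n ih =>
    rw [iteratedDeriv_succ, ih, Function.iterate_succ_apply']
    exact funext fun t ↦ (hasDerivAt_eval_mul_exp_sq_div_two _ t).deriv

lemma abs_mul_add_div_sqrt_le (a b a' b' ρ : ℝ) (hρ : |ρ| ≤ 1) :
    |ρ * (2 * a * a' * ρ + b * b') / √((2 * a ^ 2 + b ^ 2) * (2 * a' ^ 2 + b' ^ 2))| ≤ |ρ| := by
  have hρ2 : 0 ≤ 1 - ρ ^ 2 := by nlinarith [sq_abs ρ, abs_nonneg ρ]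
  have lagrange : (2 * a ^ 2 + b ^ 2) * (2 * a' ^ 2 + b' ^ 2) - (2 * a * a' * ρ + b * b') ^ 2 =
      2 * (a * b' - a' * b * ρ) ^ 2 + 2 * a' ^ 2 * (1 - ρ ^ 2) * (2 * a ^ 2 + b ^ 2) := by
    ring
  have cauchySchwarz :
      |2 * a * a' * ρ + b * b'| ≤ √((2 * a ^ 2 + b ^ 2) * (2 * a' ^ 2 + b' ^ 2)) := by
    refine Real.abs_le_sqrt (sub_nonneg.1 ?_)
    rw [lagrange]
    positivity
  rw [abs_div, abs_mul, abs_of_nonneg (Real.sqrt_nonneg _)]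
  exact div_le_of_le_mul₀ (Real.sqrt_nonneg _) (abs_nonneg ρ)
    (mul_le_mul_of_nonneg_left cauchySchwarz (abs_nonneg ρ))

lemma variance_eq_cov_self {Ω : Type*} [MeasureSpace Ω] [IsProbabilityMeasure (ℙ : Measure Ω)]
    {U : Ω → ℝ} (hU : MemLp U 2) : variance U ℙ = cov U U := by
  rw [variance_eq_sub hU, cov, sq, sq]
  rfl

namespace ProbabilityTheory.HasLaw

section StandardGaussian

variable {Ω : Type*} [MeasureSpace Ω] [IsProbabilityMeasure (ℙ : Measure Ω)] {Z : Ω → ℝ}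

lemma integrableExpSet_gaussianReal {μ : ℝ} {v : ℝ≥0} (hZ : HasLaw Z (gaussianReal μ v)) :
    integrableExpSet Z ℙ = Set.univ := by
  ext t
  simp only [integrableExpSet, Set.mem_ofPred_eq, Set.mem_univ, ← mgf_pos_iff,
    mgf_gaussianReal hZ.map_eq, Real.exp_pos]

lemma integrable_pow_gaussianReal {μ : ℝ} {v : ℝ≥0} (hZ : HasLaw Z (gaussianReal μ v)) (n : ℕ) :
    Integrable (fun ω ↦ Z ω ^ n) :=
  integrable_pow_of_mem_interior_integrableExpSet (by simp [hZ.integrableExpSet_gaussianReal]) n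

variable (hZ : HasLaw Z (gaussianReal 0 1))
include hZ

/-- The moments are the derivatives at `0` of the moment generating function `exp (t² / 2)`. -/
lemma integral_pow_eq_eval_iterate (n : ℕ) :
    ∫ ω, Z ω ^ n = ((fun p ↦ derivative p + X * p)^[n] 1).eval 0 := by
  have h0 : (0 : ℝ) ∈ interior (integrableExpSet Z ℙ) := by
    simp [hZ.integrableExpSet_gaussianReal]
  have hmgf : mgf Z ℙ = fun t ↦ Real.exp (t ^ 2 / 2) := by
    ext t
    simp [mgf_gaussianReal hZ.map_eq]
  have := iteratedDeriv_mgf_zero h0 n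
  rw [hmgf, iteratedDeriv_exp_sq_div_two] at this
  simpa using this.symm

lemma integral_quartic (c₀ c₁ c₂ c₃ c₄ : ℝ) :
    ∫ ω, (c₄ * Z ω ^ 4 + c₃ * Z ω ^ 3 + c₂ * Z ω ^ 2 + c₁ * Z ω + c₀) = 3 * c₄ + c₂ + c₀ := by
  have hi := hZ.integrable_pow_gaussianReal
  have hZi : Integrable Z := by simpa using hi 1
  have m := hZ.integral_pow_eq_eval_iterate
  have m₁ : ∫ ω, Z ω = 0 := by simpa using m 1
  have m₂ : ∫ ω, Z ω ^ 2 = 1 := by norm_num [m, Function.iterate_succ_apply']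
  have m₃ : ∫ ω, Z ω ^ 3 = 0 := by norm_num [m, Function.iterate_succ_apply']
  have m₄ : ∫ ω, Z ω ^ 4 = 3 := by norm_num [m, Function.iterate_succ_apply']
  rw [integral_add, integral_add, integral_add, integral_add]
  all_goals try fun_prop (disch := exact hi _)
  simp only [integral_const_mul, integral_const, probReal_univ, smul_eq_mul, m₁, m₂, m₃, m₄]
  ring

lemma integral_quadratic_mul_quadratic (a b c a' b' c' : ℝ) :
    ∫ ω, (a * Z ω ^ 2 + b * Z ω + c) * (a' * Z ω ^ 2 + b' * Z ω + c') =
      3 * a * a' + a * c' + b * b' + c * a' + c * c' := by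
  have expand : ∀ ω, (a * Z ω ^ 2 + b * Z ω + c) * (a' * Z ω ^ 2 + b' * Z ω + c') =
      a * a' * Z ω ^ 4 + (a * b' + b * a') * Z ω ^ 3 + (a * c' + b * b' + c * a') * Z ω ^ 2
        + (b * c' + c * b') * Z ω + c * c' := fun ω ↦ by ring
  simp_rw [expand, hZ.integral_quartic]
  ring

lemma integral_quadratic (a b c : ℝ) : ∫ ω, (a * Z ω ^ 2 + b * Z ω + c) = a + c := by
  simpa using hZ.integral_quadratic_mul_quadratic a b c 0 0 1

lemma memLp_two_quadratic (a b c : ℝ) : MemLp (fun ω ↦ a * Z ω ^ 2 + b * Z ω + c) 2 := by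
  have hmeas : AEStronglyMeasurable Z := hZ.aemeasurable.aestronglyMeasurable
  have hZ₂ : MemLp (fun ω ↦ Z ω ^ 2) 2 :=
    (memLp_two_iff_integrable_sq (by fun_prop)).2 <| by
      simpa only [← pow_mul] using hZ.integrable_pow_gaussianReal 4
  have hZ₁ : MemLp Z 2 :=
    (memLp_two_iff_integrable_sq (by fun_prop)).2 (hZ.integrable_pow_gaussianReal 2)
  exact ((hZ₂.const_mul a).add (hZ₁.const_mul b)).add (memLp_const c)

lemma cov_quadratic_quadratic (a b c a' b' c' : ℝ) :
    cov (fun ω ↦ a * Z ω ^ 2 + b * Z ω + c) (fun ω ↦ a' * Z ω ^ 2 + b' * Z ω + c') =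
      2 * a * a' + b * b' := by
  rw [cov, hZ.integral_quadratic_mul_quadratic, hZ.integral_quadratic, hZ.integral_quadratic]
  ring

lemma variance_quadratic (a b c : ℝ) :
    variance (fun ω ↦ a * Z ω ^ 2 + b * Z ω + c) ℙ = 2 * a ^ 2 + b ^ 2 := by
  rw [variance_eq_cov_self (hZ.memLp_two_quadratic a b c), hZ.cov_quadratic_quadratic]
  ring

end StandardGaussian

section CorrelatedGaussians

variable {Ω : Type*} [MeasureSpace Ω] {Z₁ Z₂ : Ω → ℝ}
  (hZ₁ : HasLaw Z₁ (gaussianReal 0 1)) (hZ₂ : HasLaw Z₂ (gaussianReal 0 1)) (hind : Z₁ ⟂ᵢ Z₂)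
include hZ₁ hZ₂ hind

lemma mul_add_mul_gaussianReal {ρ q : ℝ} (h : ρ ^ 2 + q ^ 2 = 1) :
    HasLaw (fun ω ↦ ρ * Z₁ ω + q * Z₂ ω) (gaussianReal 0 1) := by
  refine ⟨by fun_prop, ?_⟩
  have hsum := gaussianReal_add_gaussianReal_of_indepFun
    (hind.comp (measurable_const_mul ρ) (measurable_const_mul q))
    (gaussianReal_const_mul hZ₁ ρ).map_eq (gaussianReal_const_mul hZ₂ q).map_eq
  convert hsum using 2
  · rfl
  · simp
  · exact NNReal.eq (by simp [h])

variable [IsProbabilityMeasure (ℙ : Measure Ω)]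

/-- Integrating out `Z₂` replaces `W = ρ Z₁ + q Z₂` by `ρ Z₁` and `W²` by `ρ² Z₁² + q²`. -/
lemma integral_quadratic_mul_quadratic_mul_add_mul (ρ q a b c a' b' c' : ℝ) :
    ∫ ω, (a * Z₁ ω ^ 2 + b * Z₁ ω + c) *
        (a' * (ρ * Z₁ ω + q * Z₂ ω) ^ 2 + b' * (ρ * Z₁ ω + q * Z₂ ω) + c') =
      ∫ ω, (a * Z₁ ω ^ 2 + b * Z₁ ω + c) *
        (a' * ρ ^ 2 * Z₁ ω ^ 2 + b' * ρ * Z₁ ω + (c' + a' * q ^ 2)) := by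
  set U := fun ω ↦ a * Z₁ ω ^ 2 + b * Z₁ ω + c
  set V := fun ω ↦ U ω * (2 * a' * ρ * q * Z₁ ω + b' * q)
  have hU := hZ₁.memLp_two_quadratic a b c
  have hUQ : Integrable fun ω ↦
      U ω * (a' * ρ ^ 2 * Z₁ ω ^ 2 + b' * ρ * Z₁ ω + (c' + a' * q ^ 2)) :=
    hU.integrable_mul (hZ₁.memLp_two_quadratic _ _ _)
  have hV : Integrable V :=
    hU.integrable_mul (by simpa using hZ₁.memLp_two_quadratic 0 (2 * a' * ρ * q) (b' * q))
  have hVZ₂ : V ⟂ᵢ Z₂ :=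
    hind.comp (φ := fun x ↦ (a * x ^ 2 + b * x + c) * (2 * a' * ρ * q * x + b' * q))
      (by fun_prop) measurable_id
  have hUZ₂ : U ⟂ᵢ (fun ω ↦ Z₂ ω ^ 2 - 1) :=
    hind.comp (φ := fun x ↦ a * x ^ 2 + b * x + c) (ψ := fun y ↦ y ^ 2 - 1)
      (by fun_prop) (by fun_prop)
  have hZ₂int : Integrable Z₂ := by simpa using hZ₂.integrable_pow_gaussianReal 1
  have hZ₂sq : Integrable fun ω ↦ Z₂ ω ^ 2 - 1 :=
    (hZ₂.integrable_pow_gaussianReal 2).sub (integrable_const 1)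
  have hVZ₂int : Integrable fun ω ↦ V ω * Z₂ ω := hVZ₂.integrable_mul hV hZ₂int
  have hUZ₂int : Integrable fun ω ↦ U ω * (Z₂ ω ^ 2 - 1) :=
    hUZ₂.integrable_mul (hU.integrable one_le_two) hZ₂sq
  have hmean₁ : ∫ ω, Z₂ ω = 0 := by simpa using hZ₂.integral_quadratic 0 1 0
  have hmean₂ : ∫ ω, (Z₂ ω ^ 2 - 1) = 0 := by
    simpa [sub_eq_add_neg] using hZ₂.integral_quadratic 1 0 (-1)
  calc _ = ∫ ω, (U ω * (a' * ρ ^ 2 * Z₁ ω ^ 2 + b' * ρ * Z₁ ω + (c' + a' * q ^ 2))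
        + V ω * Z₂ ω + a' * q ^ 2 * (U ω * (Z₂ ω ^ 2 - 1))) := by
        congr 1
        ext ω
        simp only [U, V]
        ring
    _ = _ := by
      rw [integral_add (hUQ.fun_add hVZ₂int) (hUZ₂int.const_mul _), integral_add hUQ hVZ₂int,
        integral_const_mul,
        hVZ₂.integral_fun_mul_eq_mul_integral hV.aestronglyMeasurable hZ₂int.aestronglyMeasurable,
        hUZ₂.integral_fun_mul_eq_mul_integral hU.aestronglyMeasurable hZ₂sq.aestronglyMeasurable,
        hmean₁, hmean₂]
      simp [U]

lemma cov_quadratic_quadratic_mul_add_mul (ρ q a b c a' b' c' : ℝ) :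
    cov (fun ω ↦ a * Z₁ ω ^ 2 + b * Z₁ ω + c)
        (fun ω ↦ a' * (ρ * Z₁ ω + q * Z₂ ω) ^ 2 + b' * (ρ * Z₁ ω + q * Z₂ ω) + c') =
      ρ * (2 * a * a' * ρ + b * b') := by
  have hmean : ∫ ω, (a' * (ρ * Z₁ ω + q * Z₂ ω) ^ 2 + b' * (ρ * Z₁ ω + q * Z₂ ω) + c') =
      ∫ ω, (a' * ρ ^ 2 * Z₁ ω ^ 2 + b' * ρ * Z₁ ω + (c' + a' * q ^ 2)) := by
    simpa using hZ₁.integral_quadratic_mul_quadratic_mul_add_mul hZ₂ hind ρ q 0 0 1 a' b' c'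
  rw [cov, hZ₁.integral_quadratic_mul_quadratic_mul_add_mul hZ₂ hind, hmean, ← cov,
    hZ₁.cov_quadratic_quadratic]
  ring

end CorrelatedGaussians

end ProbabilityTheory.HasLaw

theorem optioned_assets_correlation_le_general {Ω : Type*} [MeasureSpace Ω]
    [IsProbabilityMeasure (ℙ : Measure Ω)]
    (Z1 Z2 : Ω → ℝ) (h1 : Measurable Z1) (h2 : Measurable Z2)
    (hindep : IndepFun Z1 Z2 ℙ)
    (hl1 : Measure.map Z1 ℙ = gaussianReal 0 1) (hl2 : Measure.map Z2 ℙ = gaussianReal 0 1)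
    (μ1 μ2 σ11 σ22 ρ : ℝ) (hρ : ρ ∈ Set.Icc (-1 : ℝ) 1)
    (X1 X2 : Ω → ℝ)
    (hX1 : ∀ ω, X1 ω = μ1 + Real.sqrt σ11 * Z1 ω)
    (hX2 : ∀ ω, X2 ω = μ2 + Real.sqrt σ22 * (ρ * Z1 ω + Real.sqrt (1 - ρ ^ 2) * Z2 ω))
    (δ1 γ1 θ1 δ2 γ2 θ2 Δt : ℝ)
    (Δφ1 Δφ2 : Ω → ℝ)
    (hφ1 : ∀ ω, Δφ1 ω = δ1 * X1 ω + (1/2) * γ1 * X1 ω ^ 2 + θ1 * Δt)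
    (hφ2 : ∀ ω, Δφ2 ω = δ2 * X2 ω + (1/2) * γ2 * X2 ω ^ 2 + θ2 * Δt) :
    |cov Δφ1 Δφ2 / Real.sqrt (variance Δφ1 ℙ * variance Δφ2 ℙ)| ≤ |ρ| := by
  have hZ1 : HasLaw Z1 (gaussianReal 0 1) := ⟨h1.aemeasurable, hl1⟩
  have hZ2 : HasLaw Z2 (gaussianReal 0 1) := ⟨h2.aemeasurable, hl2⟩
  set q := √(1 - ρ ^ 2)
  have hq : ρ ^ 2 + q ^ 2 = 1 := by
    rw [Real.sq_sqrt (by nlinarith [hρ.1, hρ.2])]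
    ring
  have hΔφ1 : Δφ1 = fun ω ↦ γ1 * √σ11 ^ 2 / 2 * Z1 ω ^ 2 + (δ1 + γ1 * μ1) * √σ11 * Z1 ω
      + (δ1 * μ1 + γ1 * μ1 ^ 2 / 2 + θ1 * Δt) := by
    ext ω
    rw [hφ1, hX1]
    ring
  have hΔφ2 : Δφ2 = fun ω ↦ γ2 * √σ22 ^ 2 / 2 * (ρ * Z1 ω + q * Z2 ω) ^ 2
      + (δ2 + γ2 * μ2) * √σ22 * (ρ * Z1 ω + q * Z2 ω) + (δ2 * μ2 + γ2 * μ2 ^ 2 / 2 + θ2 * Δt) := by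
    ext ω
    rw [hφ2, hX2]
    ring
  rw [hΔφ1, hΔφ2, hZ1.cov_quadratic_quadratic_mul_add_mul hZ2 hindep, hZ1.variance_quadratic,
    (hZ1.mul_add_mul_gaussianReal hZ2 hindep hq).variance_quadratic]
  exact abs_mul_add_div_sqrt_le _ _ _ _ ρ (abs_le.2 hρ)

/-- Proposition 3: correlation hedging. For a bivariate normal pair
`(X₁, X₂)` with correlation `ρ` and optioned assets `Δφᵢ = δᵢXᵢ + (1/2)γᵢXᵢ² + θᵢΔt`
with `(γᵢ, δᵢ + γᵢμᵢ) ≠ (0,0)` (so `Var(Δφᵢ) > 0`), the absolute correlation between the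
optioned assets never exceeds `|ρ|`. -/
theorem optioned_assets_correlation_le {Ω : Type*} [MeasureSpace Ω]
    [IsProbabilityMeasure (ℙ : Measure Ω)]
    (Z1 Z2 : Ω → ℝ) (h1 : Measurable Z1) (h2 : Measurable Z2)
    (hindep : IndepFun Z1 Z2 ℙ)
    (hl1 : Measure.map Z1 ℙ = gaussianReal 0 1) (hl2 : Measure.map Z2 ℙ = gaussianReal 0 1)
    (μ1 μ2 σ11 σ22 ρ : ℝ) (h11 : 0 < σ11) (h22 : 0 < σ22) (hρ : ρ ∈ Set.Icc (-1 : ℝ) 1)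
    (X1 X2 : Ω → ℝ)
    (hX1 : ∀ ω, X1 ω = μ1 + Real.sqrt σ11 * Z1 ω)
    (hX2 : ∀ ω, X2 ω = μ2 + Real.sqrt σ22 * (ρ * Z1 ω + Real.sqrt (1 - ρ ^ 2) * Z2 ω))
    (δ1 γ1 θ1 δ2 γ2 θ2 Δt : ℝ) (hΔt : 0 < Δt)
    (hnz1 : ¬ (γ1 = 0 ∧ δ1 + γ1 * μ1 = 0)) (hnz2 : ¬ (γ2 = 0 ∧ δ2 + γ2 * μ2 = 0))
    (Δφ1 Δφ2 : Ω → ℝ)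
    (hφ1 : ∀ ω, Δφ1 ω = δ1 * X1 ω + (1/2) * γ1 * X1 ω ^ 2 + θ1 * Δt)
    (hφ2 : ∀ ω, Δφ2 ω = δ2 * X2 ω + (1/2) * γ2 * X2 ω ^ 2 + θ2 * Δt) :
    |cov Δφ1 Δφ2 / Real.sqrt (variance Δφ1 ℙ * variance Δφ2 ℙ)| ≤ |ρ| :=
  optioned_assets_correlation_le_general Z1 Z2 h1 h2 hindep hl1 hl2 μ1 μ2 σ11 σ22 ρ hρ X1 X2 hX1 hX2
    δ1 γ1 θ1 δ2 γ2 θ2 Δt Δφ1 Δφ2 hφ1 hφ2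
end

section
/- Let σ₁₁, σ₂₂ > 0, ρ ∈ [−1,1] with σ₁₂ = ρ√(σ₁₁σ₂₂), and γ₁, γ₂, τ₁, τ₂ ∈ ℝ with (1/2)γᵢ²σᵢᵢ + τᵢ² > 0 for i = 1,2. If |γ₁τ₂√σ₁₁| = |γ₂τ₁√σ₂₂|, |ρ| = 1, and ρτ₁τ₂γ₁γ₂ ≥ 0, then |(1/2)γ₁γ₂σ₁₂ + τ₁τ₂| = √(((1/2)γ₁²σ₁₁ + τ₁²)((1/2)γ₂²σ₂₂ + τ₂²)), i.e., equality holds in the correlation-hedging inequality and the optioned-asset correlation has the same absolute value as the stock correlation. -/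
/-- equality conditions in the correlation-hedging inequality. With
`σ₁₂ = ρ√(σ₁₁σ₂₂)`, if `|γ₁τ₂√σ₁₁| = |γ₂τ₁√σ₂₂|`, `|ρ| = 1` and `ρτ₁τ₂γ₁γ₂ ≥ 0`, then
`|(1/2)γ₁γ₂σ₁₂ + τ₁τ₂| = √(((1/2)γ₁²σ₁₁ + τ₁²)((1/2)γ₂²σ₂₂ + τ₂²))`. -/
theorem correlation_hedging_equality (σ11 σ22 ρ γ1 γ2 τ1 τ2 : ℝ)
    (h11 : 0 < σ11) (h22 : 0 < σ22) (hρ : ρ ∈ Set.Icc (-1 : ℝ) 1)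
    (hv1 : 0 < (1/2) * γ1 ^ 2 * σ11 + τ1 ^ 2) (hv2 : 0 < (1/2) * γ2 ^ 2 * σ22 + τ2 ^ 2)
    (hc1 : |γ1 * τ2 * Real.sqrt σ11| = |γ2 * τ1 * Real.sqrt σ22|)
    (hc2 : |ρ| = 1) (hc3 : 0 ≤ ρ * τ1 * τ2 * γ1 * γ2) :
    |(1/2) * γ1 * γ2 * (ρ * Real.sqrt (σ11 * σ22)) + τ1 * τ2| =
      Real.sqrt (((1/2) * γ1 ^ 2 * σ11 + τ1 ^ 2) * ((1/2) * γ2 ^ 2 * σ22 + τ2 ^ 2)) := by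
  set a := Real.sqrt σ11 with hadef
  set b := Real.sqrt σ22 with hbdef
  have ha : a ^ 2 = σ11 := Real.sq_sqrt h11.le
  have hb : b ^ 2 = σ22 := Real.sq_sqrt h22.le
  have ha0 : 0 ≤ a := Real.sqrt_nonneg _
  have hb0 : 0 ≤ b := Real.sqrt_nonneg _
  have hab : Real.sqrt (σ11 * σ22) = a * b := Real.sqrt_mul h11.le σ22
  have hρ2 : ρ ^ 2 = 1 := by
    have := sq_abs ρ
    rw [hc2] at this
    linarith
  have h1 : |τ1 * τ2 * γ1 * γ2| = ρ * τ1 * τ2 * γ1 * γ2 := by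
    have h2 : |ρ * τ1 * τ2 * γ1 * γ2| = ρ * τ1 * τ2 * γ1 * γ2 := abs_of_nonneg hc3
    calc |τ1 * τ2 * γ1 * γ2| = |ρ| * |τ1 * τ2 * γ1 * γ2| := by rw [hc2]; ring
      _ = |ρ * τ1 * τ2 * γ1 * γ2| := by rw [← abs_mul]; ring_nf
      _ = ρ * τ1 * τ2 * γ1 * γ2 := h2
  have hkey : ρ * γ1 * γ2 * a * b * τ1 * τ2 = γ1 ^ 2 * τ2 ^ 2 * a ^ 2 := by
    have e0 : ρ * γ1 * γ2 * a * b * τ1 * τ2 = (ρ * τ1 * τ2 * γ1 * γ2) * (a * b) := by ring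
    rw [e0, ← h1]
    have e1 : |τ1 * τ2 * γ1 * γ2| * (a * b) = |(γ1 * τ2 * a) * (γ2 * τ1 * b)| := by
      rw [abs_mul]
      nth_rewrite 1 [← abs_of_nonneg ha0, ← abs_of_nonneg hb0]
      rw [← abs_mul, ← abs_mul, ← abs_mul]
      ring_nf
    rw [e1, abs_mul, ← hc1, ← sq, sq_abs]
    ring
  have hc1' : γ1 ^ 2 * τ2 ^ 2 * a ^ 2 = γ2 ^ 2 * τ1 ^ 2 * b ^ 2 := by
    have := congrArg (· ^ 2) hc1
    simpa [mul_pow, sq_abs] using this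
  rw [hab, ← Real.sqrt_sq_eq_abs]
  congr 1
  rw [← ha, ← hb]
  linear_combination (γ1 ^ 2 * γ2 ^ 2 * a ^ 2 * b ^ 2 / 4) * hρ2 + hkey + (1/2) * hc1'
end

section
/- Let μ ∈ ℝ, σ > 0, k ∈ ℝ and Δt > 0. Then there exist (δ, γ, θ) ∈ ℝ³ such that all three of the following strict inequalities hold simultaneously: (1) −kδ + (k²/2)γ + θΔt + k > 0; (2) μδ + ((σ + μ²)/2)γ + θΔt − μ > 0; (3) (σ/2)γ² + (μγ + δ)² − 1 < 0. -/
/-- feasibility in Proposition 4 for distressed stocks. Given moments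
`(μ, σ)` with `σ > 0`, a loss level `k` and `Δt > 0`, there exist Greeks `(δ, γ, θ)` that
hedge the extreme loss `-k`, raise the mean and lower the variance simultaneously. -/
theorem extreme_hedging_feasibility_I (μ σ k Δt : ℝ) (hσ : 0 < σ) (hΔt : 0 < Δt) :
    ∃ δ γ θ : ℝ,
      0 < -k * δ + (k ^ 2 / 2) * γ + θ * Δt + k ∧
      0 < μ * δ + ((σ + μ ^ 2) / 2) * γ + θ * Δt - μ ∧
      (σ / 2) * γ ^ 2 + (μ * γ + δ) ^ 2 - 1 < 0 := by
  refine ⟨0, 0, (max (-k) μ + 1) / Δt, ?_, ?_, ?_⟩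
  · have : (max (-k) μ + 1) / Δt * Δt = max (-k) μ + 1 := div_mul_cancel₀ _ hΔt.ne'
    rw [this]
    have := le_max_left (-k) μ
    nlinarith
  · have : (max (-k) μ + 1) / Δt * Δt = max (-k) μ + 1 := div_mul_cancel₀ _ hΔt.ne'
    rw [this]
    have := le_max_right (-k) μ
    nlinarith
  · norm_num
end
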